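/- (Comparison of mixed and Dirichlet solutions) Let f ∈ L²(Ω) with f ≥ 0. Let u ∈ E^s_{Σ1} be a weak solution of the mixed problem with right-hand side f satisfying u ≥ 0 a.e. in ℝ^N, and let ũ be the weak solution of the Dirichlet problem for (−Δ)^s with right-hand side f, i.e. ũ : ℝ^N → ℝ is measurable, ũ = 0 a.e. in ℝ^N \ Ω, ∬_{ℝ^N × ℝ^N} |ũ(x) − ũ(y)|² / |x − y|^{N+2s} dx dy < ∞, and (a_{N,s}/2) ∬_{ℝ^N × ℝ^N} (ũ(x) − ũ(y))(φ(x) − φ(y)) / |x − y|^{N+2s} dx dy = ∫_Ω f φ dx for every such test function φ vanishing a.e. outside Ω. Then u ≥ ũ a.e. in ℝ^N. -/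

import Mathlib

/-! The positive part `w = (ũ - u)⁺` vanishes outside `Ω`, because `ũ = 0` there and `u ≥ 0`.
So it is a test function for both problems, and for it the Gagliardo form over `ℝ^N × ℝ^N`
reduces to the form over `Q`. Subtracting the two weak formulations gives
`∬_Q K(ũ - u, w) = 0`, while pointwise `K(w, w) ≤ K(ũ - u, w)`; hence the Gagliardo energy of
`w` over `Q` vanishes. Comparing `w` on `Ω` with its zero values on a ball away from `Ω`
(a fractional Poincaré inequality) then forces `w = 0`. -/

open MeasureTheory Set

noncomputable section

/-- Euclidean space ℝ^N. -/
abbrev Rn (N : ℕ) := EuclideanSpace ℝ (Fin N)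

/-- The set Q := ℝ^{2N} \ ((ℝ^N \ Ω) × (ℝ^N \ Ω)). -/
def Qset (N : ℕ) (Ω : Set (Rn N)) : Set (Rn N × Rn N) :=
  Set.univ \ (Ωᶜ ×ˢ Ωᶜ)

/-- The kernel (u(x)-u(y))(v(x)-v(y))/|x-y|^{N+2s}. -/
def frKer (N : ℕ) (s : ℝ) (u v : Rn N → ℝ) (p : Rn N × Rn N) : ℝ :=
  (u p.1 - u p.2) * (v p.1 - v p.2) / ‖p.1 - p.2‖ ^ ((N : ℝ) + 2 * s)

/-- Membership in the space E^s_{Σ₁}: measurable, vanishing a.e. on Σ₁,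
with finite L²(Ω) norm and finite Gagliardo seminorm over Q. -/
def MemE (N : ℕ) (s : ℝ) (Ω S1 : Set (Rn N)) (u : Rn N → ℝ) : Prop :=
  Measurable u ∧ (∀ᵐ x : Rn N, x ∈ S1 → u x = 0) ∧
  IntegrableOn (fun x => (u x) ^ 2) Ω ∧
  IntegrableOn (frKer N s u u) (Qset N Ω)

/-- Weak solution of the mixed problem (-Δ)^s u = f in Ω, u = 0 in Σ₁, 𝒩_s u = 0 in Σ₂. -/
def IsWeakSolMixed (N : ℕ) (s aNs : ℝ) (Ω S1 : Set (Rn N)) (f u : Rn N → ℝ) : Prop :=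
  MemE N s Ω S1 u ∧ ∀ φ : Rn N → ℝ, MemE N s Ω S1 φ →
    (aNs / 2) * ∫ p in Qset N Ω, frKer N s u φ p = ∫ x in Ω, f x * φ x

/-- Membership in the space H^s_0(Ω) of the Dirichlet problem: measurable, vanishing
a.e. outside Ω, with finite Gagliardo seminorm over all of ℝ^N × ℝ^N. -/
def MemD (N : ℕ) (s : ℝ) (Ω : Set (Rn N)) (u : Rn N → ℝ) : Prop :=
  Measurable u ∧ (∀ᵐ x : Rn N, x ∉ Ω → u x = 0) ∧
  MeasureTheory.Integrable (frKer N s u u)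

open scoped ENNReal

section Kernel

lemma posPart_sub_posPart_mul_self_le {α : Type*} [CommRing α] [LinearOrder α]
    [IsStrictOrderedRing α] (a b : α) :
    (a⁺ - b⁺) * (a⁺ - b⁺) ≤ (a - b) * (a⁺ - b⁺) := by
  simp only [posPart_def]
  rcases le_total a 0 with ha | ha <;> rcases le_total b 0 with hb | hb <;>
    simp [ha, hb] <;> nlinarith

variable {N : ℕ} {s : ℝ}

lemma frKer_denom_nonneg (p : Rn N × Rn N) : 0 ≤ ‖p.1 - p.2‖ ^ ((N : ℝ) + 2 * s) :=
  Real.rpow_nonneg (norm_nonneg _) _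

lemma frKer_self_nonneg (u : Rn N → ℝ) (p : Rn N × Rn N) : 0 ≤ frKer N s u u p :=
  div_nonneg (mul_self_nonneg _) (frKer_denom_nonneg p)

lemma frKer_sub_left (u v w : Rn N → ℝ) (p : Rn N × Rn N) :
    frKer N s (v - u) w p = frKer N s v w p - frKer N s u w p := by
  simp only [frKer, Pi.sub_apply]
  ring

lemma abs_frKer_le (u v : Rn N → ℝ) (p : Rn N × Rn N) :
    |frKer N s u v p| ≤ frKer N s u u p + frKer N s v v p := by
  simp only [frKer]
  rw [abs_div, abs_of_nonneg (frKer_denom_nonneg p), ← add_div]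
  refine div_le_div_of_nonneg_right ?_ (frKer_denom_nonneg p)
  set a := u p.1 - u p.2
  set b := v p.1 - v p.2
  rw [abs_mul]
  nlinarith [sq_nonneg (|a| - |b|), sq_abs a, sq_abs b]

lemma frKer_posPart_le (g : Rn N → ℝ) (p : Rn N × Rn N) :
    frKer N s g⁺ g⁺ p ≤ frKer N s g g⁺ p := by
  simp only [frKer, Pi.posPart_apply]
  exact div_le_div_of_nonneg_right (posPart_sub_posPart_mul_self_le _ _) (frKer_denom_nonneg p)

lemma frKer_posPart_self_le (g : Rn N → ℝ) (p : Rn N × Rn N) :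
    frKer N s g⁺ g⁺ p ≤ frKer N s g g p := by
  simp only [frKer, Pi.posPart_apply, posPart_def]
  refine div_le_div_of_nonneg_right ?_ (frKer_denom_nonneg p)
  rw [← abs_mul_abs_self, ← abs_mul_abs_self (g p.1 - g p.2)]
  have h := abs_max_sub_max_le_abs (g p.1) (g p.2) 0
  exact mul_le_mul h h (abs_nonneg _) (abs_nonneg _)

lemma frKer_sub_self_le (u v : Rn N → ℝ) (p : Rn N × Rn N) :
    frKer N s (v - u) (v - u) p ≤ 2 * frKer N s v v p + 2 * frKer N s u u p := by
  simp only [frKer, Pi.sub_apply, mul_div_assoc', ← add_div]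
  refine div_le_div_of_nonneg_right ?_ (frKer_denom_nonneg p)
  nlinarith [sq_nonneg (v p.1 - v p.2 + (u p.1 - u p.2))]

lemma measurable_frKer {u v : Rn N → ℝ} (hu : Measurable u) (hv : Measurable v) :
    Measurable (frKer N s u v) :=
  (((hu.comp measurable_fst).sub (hu.comp measurable_snd)).mul
      ((hv.comp measurable_fst).sub (hv.comp measurable_snd))).div
    ((measurable_fst.sub measurable_snd).norm.pow measurable_const)

end Kernel

section Energy

variable {N : ℕ} {s : ℝ} {μ : Measure (Rn N × Rn N)} {u v : Rn N → ℝ}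

lemma integrable_frKer (hu : Measurable u) (hv : Measurable v)
    (huu : Integrable (frKer N s u u) μ) (hvv : Integrable (frKer N s v v) μ) :
    Integrable (frKer N s u v) μ :=
  (huu.add hvv).mono' (measurable_frKer hu hv).aestronglyMeasurable
    (ae_of_all _ fun p => abs_frKer_le u v p)

lemma integrable_frKer_posPart_sub (hu : Measurable u) (hv : Measurable v)
    (huu : Integrable (frKer N s u u) μ) (hvv : Integrable (frKer N s v v) μ) :
    Integrable (frKer N s (v - u)⁺ (v - u)⁺) μ := by
  have hwm : Measurable (v - u)⁺ := (hv.sub hu).posPart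
  refine ((hvv.const_mul 2).add (huu.const_mul 2)).mono'
    (measurable_frKer hwm hwm).aestronglyMeasurable (ae_of_all _ fun p => ?_)
  rw [Real.norm_eq_abs, abs_of_nonneg (frKer_self_nonneg _ p)]
  exact (frKer_posPart_self_le _ p).trans (frKer_sub_self_le u v p)

lemma frKer_posPart_sub_ae_eq_zero (hu : Measurable u) (hv : Measurable v)
    (huu : Integrable (frKer N s u u) μ) (hvv : Integrable (frKer N s v v) μ)
    (h : ∫ p, frKer N s v (v - u)⁺ p ∂μ = ∫ p, frKer N s u (v - u)⁺ p ∂μ) :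
    frKer N s (v - u)⁺ (v - u)⁺ =ᵐ[μ] 0 := by
  have hwm : Measurable (v - u)⁺ := (hv.sub hu).posPart
  have hww := integrable_frKer_posPart_sub hu hv huu hvv
  have hvw := integrable_frKer hv hwm hvv hww
  have huw := integrable_frKer hu hwm huu hww
  refine (integral_eq_zero_iff_of_nonneg (fun p => frKer_self_nonneg _ p) hww).mp
    (le_antisymm ?_ (integral_nonneg fun p => frKer_self_nonneg _ p))
  calc ∫ p, frKer N s (v - u)⁺ (v - u)⁺ p ∂μ
      ≤ ∫ p, (frKer N s v (v - u)⁺ p - frKer N s u (v - u)⁺ p) ∂μ :=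
        integral_mono hww (hvw.sub huw) fun p => by
          simpa only [frKer_sub_left] using frKer_posPart_le (v - u) p
    _ = 0 := by rw [integral_sub hvw huw, h, sub_self]

end Energy

section Qset

variable {N : ℕ} {s : ℝ} {Ω : Set (Rn N)}

lemma measurableSet_Qset (hΩ : MeasurableSet Ω) : MeasurableSet (Qset N Ω) :=
  MeasurableSet.univ.diff (hΩ.compl.prod hΩ.compl)

lemma prod_compl_subset_Qset : Ω ×ˢ Ωᶜ ⊆ Qset N Ω :=
  fun _ hp => ⟨mem_univ _, fun h => h.1 hp.1⟩

lemma frKer_ae_eq_indicator_Qset {g h : Rn N → ℝ} (hh : ∀ᵐ x, x ∉ Ω → h x = 0) :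
    frKer N s g h =ᵐ[volume] (Qset N Ω).indicator (frKer N s g h) := by
  have h₁ : ∀ᵐ p : Rn N × Rn N, p.1 ∉ Ω → h p.1 = 0 :=
    (Measure.quasiMeasurePreserving_fst (μ := volume) (ν := volume)).ae hh
  have h₂ : ∀ᵐ p : Rn N × Rn N, p.2 ∉ Ω → h p.2 = 0 :=
    (Measure.quasiMeasurePreserving_snd (μ := volume) (ν := volume)).ae hh
  filter_upwards [h₁, h₂] with p hp₁ hp₂
  by_cases hp : p ∈ Qset N Ω
  · rw [indicator_of_mem hp]
  · have hout : p.1 ∉ Ω ∧ p.2 ∉ Ω := by simpa [Qset] using hp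
    rw [indicator_of_notMem hp, frKer, hp₁ hout.1, hp₂ hout.2]
    simp

lemma integrable_frKer_iff_integrableOn_Qset (hΩ : MeasurableSet Ω) {g h : Rn N → ℝ}
    (hh : ∀ᵐ x, x ∉ Ω → h x = 0) :
    Integrable (frKer N s g h) ↔ IntegrableOn (frKer N s g h) (Qset N Ω) := by
  rw [integrable_congr (frKer_ae_eq_indicator_Qset hh),
    integrable_indicator_iff (measurableSet_Qset hΩ)]

lemma integral_frKer_eq_setIntegral_Qset (hΩ : MeasurableSet Ω) {g h : Rn N → ℝ}
    (hh : ∀ᵐ x, x ∉ Ω → h x = 0) :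
    ∫ p, frKer N s g h p = ∫ p in Qset N Ω, frKer N s g h p := by
  rw [integral_congr_ae (frKer_ae_eq_indicator_Qset hh),
    integral_indicator (measurableSet_Qset hΩ)]

end Qset

section Poincare

variable {N : ℕ} {s : ℝ} {Ω : Set (Rn N)}

lemma exists_ball_far_from_isBounded (hN : 1 ≤ N) (hΩb : Bornology.IsBounded Ω) :
    ∃ c : Rn N, ∃ D > 0, ∀ x ∈ Ω, ∀ y ∈ Metric.ball c 1, 0 < ‖x - y‖ ∧ ‖x - y‖ ≤ D := by
  obtain ⟨R, hR, hΩR⟩ := hΩb.subset_ball_lt 0 0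
  have : Nonempty (Fin N) := ⟨⟨0, hN⟩⟩
  obtain ⟨c, hc⟩ := exists_norm_eq (Rn N) (by linarith : 0 ≤ R + 1)
  refine ⟨c, 2 * R + 2, by linarith, fun x hx y hy => ?_⟩
  have hx' : ‖x‖ < R := by simpa using hΩR hx
  have hy' : ‖y - c‖ < 1 := by simpa [dist_eq_norm] using hy
  have h₁ := norm_sub_norm_le y x
  have h₂ := norm_sub_norm_le c y
  have h₃ := norm_le_norm_add_norm_sub' y c
  rw [norm_sub_rev] at h₁ h₂
  constructor <;> linarith [norm_sub_le x y]

/-- A fractional Poincaré inequality for functions vanishing off `Ω`. -/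
lemma exists_pos_mul_lintegral_sq_le (hN : 1 ≤ N) (hs : 0 ≤ s) (hΩ : MeasurableSet Ω)
    (hΩb : Bornology.IsBounded Ω) :
    ∃ κ : ℝ≥0∞, κ ≠ 0 ∧ ∀ g : Rn N → ℝ, Measurable g → (∀ᵐ x, x ∉ Ω → g x = 0) →
      κ * ∫⁻ x in Ω, ENNReal.ofReal (g x ^ 2) ≤
        ∫⁻ p in Ω ×ˢ Ωᶜ, ENNReal.ofReal (frKer N s g g p) := by
  obtain ⟨c, D, hD, hfar⟩ := exists_ball_far_from_isBounded hN hΩb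
  set B := Metric.ball c 1
  set Dp := D ^ ((N : ℝ) + 2 * s)
  have hDp : 0 < Dp := Real.rpow_pos_of_pos hD _
  have hBΩ : B ⊆ Ωᶜ := fun y hy hyΩ => by simpa using (hfar y hyΩ y hy).1
  refine ⟨ENNReal.ofReal Dp⁻¹ * volume B,
    mul_ne_zero (by simpa using hDp) (Metric.measure_ball_pos _ _ one_pos).ne',
    fun g hgm hg => ?_⟩
  have hbound : ∀ x ∈ Ω, ∀ᵐ y ∂volume.restrict B,
      ENNReal.ofReal (Dp⁻¹ * g x ^ 2) ≤ ENNReal.ofReal (frKer N s g g (x, y)) := by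
    intro x hx
    filter_upwards [ae_restrict_mem Metric.isOpen_ball.measurableSet,
      ae_restrict_of_ae hg] with y hy hgy
    obtain ⟨hpos, hle⟩ := hfar x hx y hy
    refine ENNReal.ofReal_le_ofReal ?_
    rw [frKer, hgy (hBΩ hy), sub_zero, ← sq, inv_mul_eq_div]
    exact div_le_div_of_nonneg_left (sq_nonneg _) (Real.rpow_pos_of_pos hpos _)
      (Real.rpow_le_rpow hpos.le hle (by positivity))
  calc ENNReal.ofReal Dp⁻¹ * volume B * ∫⁻ x in Ω, ENNReal.ofReal (g x ^ 2)
      = ∫⁻ x in Ω, ∫⁻ _ in B, ENNReal.ofReal (Dp⁻¹ * g x ^ 2) := by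
        rw [← lintegral_const_mul _ (hgm.pow_const 2).ennreal_ofReal]
        refine lintegral_congr fun x => ?_
        rw [setLIntegral_const, ENNReal.ofReal_mul (inv_nonneg.mpr hDp.le)]
        ring
    _ ≤ ∫⁻ x in Ω, ∫⁻ y in B, ENNReal.ofReal (frKer N s g g (x, y)) :=
        setLIntegral_mono' hΩ fun x hx => lintegral_mono_ae (hbound x hx)
    _ = ∫⁻ p in Ω ×ˢ B, ENNReal.ofReal (frKer N s g g p) :=
        (setLIntegral_prod _ (measurable_frKer hgm hgm).ennreal_ofReal.aemeasurable).symm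
    _ ≤ ∫⁻ p in Ω ×ˢ Ωᶜ, ENNReal.ofReal (frKer N s g g p) :=
        lintegral_mono_set (prod_mono subset_rfl hBΩ)

end Poincare

section Consequences

variable {N : ℕ} {s : ℝ} {Ω : Set (Rn N)}

lemma MemD.integrableOn_sq (hN : 1 ≤ N) (hs : 0 ≤ s) (hΩ : MeasurableSet Ω)
    (hΩb : Bornology.IsBounded Ω) {g : Rn N → ℝ} (hg : MemD N s Ω g) :
    IntegrableOn (fun x => g x ^ 2) Ω := by
  obtain ⟨hgm, hg0, hgg⟩ := hg
  obtain ⟨κ, hκ, hpoinc⟩ := exists_pos_mul_lintegral_sq_le hN hs hΩ hΩb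
  have hfin : κ * ∫⁻ x in Ω, ENNReal.ofReal (g x ^ 2) ≠ ⊤ :=
    ((hpoinc g hgm hg0).trans (setLIntegral_le_lintegral _ _)).trans_lt
      hgg.lintegral_lt_top |>.ne
  refine ⟨(hgm.pow_const 2).aestronglyMeasurable, ?_⟩
  rw [hasFiniteIntegral_iff_ofReal (ae_of_all _ fun x => sq_nonneg (g x))]
  exact ENNReal.lt_top_of_mul_ne_top_right hfin hκ

lemma MemD.memE (hN : 1 ≤ N) (hs : 0 ≤ s) (hΩ : MeasurableSet Ω)
    (hΩb : Bornology.IsBounded Ω) {S1 : Set (Rn N)} (hS1 : S1 ⊆ Ωᶜ) {g : Rn N → ℝ}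
    (hg : MemD N s Ω g) : MemE N s Ω S1 g :=
  ⟨hg.1, hg.2.1.mono fun _ h hx => h (hS1 hx), hg.integrableOn_sq hN hs hΩ hΩb,
    (integrable_frKer_iff_integrableOn_Qset hΩ hg.2.1).mp hg.2.2⟩

lemma ae_eq_zero_of_frKer_ae_eq_zero (hN : 1 ≤ N) (hs : 0 ≤ s) (hΩ : MeasurableSet Ω)
    (hΩb : Bornology.IsBounded Ω) {g : Rn N → ℝ} (hgm : Measurable g)
    (hg : ∀ᵐ x, x ∉ Ω → g x = 0) (hgg : frKer N s g g =ᵐ[volume.restrict (Qset N Ω)] 0) :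
    g =ᵐ[volume] 0 := by
  obtain ⟨κ, hκ, hpoinc⟩ := exists_pos_mul_lintegral_sq_le hN hs hΩ hΩb
  have henergy : ∫⁻ p in Ω ×ˢ Ωᶜ, ENNReal.ofReal (frKer N s g g p) = 0 := by
    refine (lintegral_congr_ae ?_).trans lintegral_zero
    filter_upwards [ae_restrict_of_ae_restrict_of_subset prod_compl_subset_Qset hgg] with p hp
    simp [hp]
  have hL2 : ∫⁻ x in Ω, ENNReal.ofReal (g x ^ 2) = 0 := by
    simpa [hκ] using (hpoinc g hgm hg).trans_eq henergy
  have hin : ∀ᵐ x ∂volume.restrict Ω, g x = 0 := by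
    filter_upwards [(lintegral_eq_zero_iff (hgm.pow_const 2).ennreal_ofReal).mp hL2] with x hx
    simpa using hx
  filter_upwards [(ae_restrict_iff' hΩ).mp hin, hg] with x hin hout
  by_cases hx : x ∈ Ω
  exacts [hin hx, hout hx]

end Consequences

theorem mixed_dominates_dirichlet_general
    {N : ℕ} (hN : 1 ≤ N) {s aNs : ℝ} (hs0 : 0 < s) (haNs : 0 < aNs)
    {Ω S1 S2 : Set (Rn N)} (hΩo : IsOpen Ω) (hΩb : Bornology.IsBounded Ω)
    (hcov : closure S1 ∪ closure S2 = Ωᶜ)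
    (f : Rn N → ℝ)
    (u : Rn N → ℝ) (hu : IsWeakSolMixed N s aNs Ω S1 f u)
    (hu_nonneg : ∀ᵐ x : Rn N, 0 ≤ u x)
    (v : Rn N → ℝ) (hvD : MemD N s Ω v)
    (hv : ∀ φ : Rn N → ℝ, MemD N s Ω φ →
      (aNs / 2) * ∫ p : Rn N × Rn N, frKer N s v φ p = ∫ x in Ω, f x * φ x) :
    ∀ᵐ x : Rn N, v x ≤ u x := by
  obtain ⟨⟨hum, -, -, huQ⟩, hu_eq⟩ := hu
  obtain ⟨hvm, hv0, hvv⟩ := hvD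
  have hΩ : MeasurableSet Ω := hΩo.measurableSet
  have hS1 : S1 ⊆ Ωᶜ := subset_closure.trans (hcov ▸ subset_union_left)
  have hwm : Measurable (v - u)⁺ := (hvm.sub hum).posPart
  have hw0 : ∀ᵐ x, x ∉ Ω → (v - u)⁺ x = 0 := by
    filter_upwards [hv0, hu_nonneg] with x hvx hux hx
    simp [hvx hx, hux]
  have hwD : MemD N s Ω (v - u)⁺ := ⟨hwm, hw0,
    (integrable_frKer_iff_integrableOn_Qset hΩ hw0).mpr
      (integrable_frKer_posPart_sub hum hvm huQ hvv.integrableOn)⟩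
  have htest : ∫ p in Qset N Ω, frKer N s v (v - u)⁺ p =
      ∫ p in Qset N Ω, frKer N s u (v - u)⁺ p := by
    have h := hu_eq _ (hwD.memE hN hs0.le hΩ hΩb hS1)
    rw [← hv _ hwD, integral_frKer_eq_setIntegral_Qset hΩ hw0] at h
    exact (mul_left_cancel₀ (by positivity) h).symm
  have hw : (v - u)⁺ =ᵐ[volume] 0 := ae_eq_zero_of_frKer_ae_eq_zero hN hs0.le hΩ hΩb hwm hw0
    (frKer_posPart_sub_ae_eq_zero hum hvm huQ hvv.integrableOn htest)
  filter_upwards [hw] with x hx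
  simpa [sub_nonpos] using hx

/-- Comparison between the solution of the mixed problem and the solution of the
Dirichlet problem with the same nonnegative right-hand side f: u ≥ ũ a.e. -/
theorem mixed_dominates_dirichlet
    {N : ℕ} (hN : 1 ≤ N) {s aNs : ℝ} (hs0 : 0 < s) (hs1 : s < 1) (haNs : 0 < aNs)
    {Ω S1 S2 : Set (Rn N)} (hΩo : IsOpen Ω) (hΩb : Bornology.IsBounded Ω)
    (hΩc : IsConnected Ω)
    (hS1o : IsOpen S1) (hS2o : IsOpen S2)
    (hS1m : 0 < volume S1) (hS2m : 0 < volume S2)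
    (hdisj : Disjoint S1 S2) (hcov : closure S1 ∪ closure S2 = Ωᶜ)
    (f : Rn N → ℝ) (hf_meas : Measurable f) (hfL2 : MemLp f 2 (volume.restrict Ω))
    (hf_nonneg : ∀ᵐ x ∂(volume.restrict Ω), 0 ≤ f x)
    (u : Rn N → ℝ) (hu : IsWeakSolMixed N s aNs Ω S1 f u)
    (hu_nonneg : ∀ᵐ x : Rn N, 0 ≤ u x)
    (v : Rn N → ℝ) (hvD : MemD N s Ω v)
    (hv : ∀ φ : Rn N → ℝ, MemD N s Ω φ →
      (aNs / 2) * ∫ p : Rn N × Rn N, frKer N s v φ p = ∫ x in Ω, f x * φ x) :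
    ∀ᵐ x : Rn N, v x ≤ u x :=
  mixed_dominates_dirichlet_general hN hs0 haNs hΩo hΩb hcov f u hu hu_nonneg v hvD hv
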